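/- The measure on GL₂(ℝ) obtained via the decomposition GL₂(ℝ) = K₀ H_{(1,0)} by ∫_{GL₂} f dμ = ∫_{K₀} ∫_{H} f(M C) |det C| dμ_H(C) dμ_{K₀}(M), where dμ_{K₀} = ds dt/(s²+t²) and dμ_H = du dv/v², is a left Haar measure on GL₂(ℝ); explicitly, for integrable f, ∫_{GL₂(ℝ)} f dμ_{GL₂} = ∫_{ℝ²} ∫_{ℝ²} f(M(s,t) C(u,v)) |v| (du dv/v²)(ds dt/(s²+t²)). -/

import Mathlib

set_option maxHeartbeats 1000000

open Matrix MeasureTheory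

/-- `M(s,t) = !![s,-t;t,s]`. -/
noncomputable def Mst (s t : ℝ) : Matrix (Fin 2) (Fin 2) ℝ := !![s, -t; t, s]

/-- `C(u,v) = !![1,0;u,v]`. -/
noncomputable def Cuv (u v : ℝ) : Matrix (Fin 2) (Fin 2) ℝ := !![1, 0; u, v]

/-- The iterated-integral functional coming from the decomposition
`GL₂(ℝ) = K₀ H_{(1,0)}`, i.e. `∫∫ f(M(s,t) C(u,v)) |v| (du dv/v²)(ds dt/(s²+t²))`. -/
noncomputable def iwasawaIntegral (f : Matrix (Fin 2) (Fin 2) ℝ → ℝ) : ℝ :=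
  ∫ q : (ℝ × ℝ) × (ℝ × ℝ),
    f (Mst q.1.1 q.1.2 * Cuv q.2.1 q.2.2) * |q.2.2| /
      (q.2.2 ^ 2 * (q.1.1 ^ 2 + q.1.2 ^ 2))

namespace GL2Iwasawa

abbrev E4 : Type := (ℝ × ℝ) × (ℝ × ℝ)

instance : (volume : Measure (ℝ × ℝ)).IsAddHaarMeasure := by
  rw [Measure.volume_eq_prod]; infer_instance

instance : (volume : Measure E4).IsAddHaarMeasure := by
  rw [Measure.volume_eq_prod]; infer_instance

open ContinuousLinearMap in
noncomputable def x1 : E4 →L[ℝ] ℝ := (fst ℝ ℝ ℝ).comp (fst ℝ (ℝ×ℝ) (ℝ×ℝ))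
open ContinuousLinearMap in
noncomputable def x2 : E4 →L[ℝ] ℝ := (snd ℝ ℝ ℝ).comp (fst ℝ (ℝ×ℝ) (ℝ×ℝ))
open ContinuousLinearMap in
noncomputable def x3 : E4 →L[ℝ] ℝ := (fst ℝ ℝ ℝ).comp (snd ℝ (ℝ×ℝ) (ℝ×ℝ))
open ContinuousLinearMap in
noncomputable def x4 : E4 →L[ℝ] ℝ := (snd ℝ ℝ ℝ).comp (snd ℝ (ℝ×ℝ) (ℝ×ℝ))

@[simp] lemma x1_apply (p : E4) : x1 p = p.1.1 := rfl
@[simp] lemma x2_apply (p : E4) : x2 p = p.1.2 := rfl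
@[simp] lemma x3_apply (p : E4) : x3 p = p.2.1 := rfl
@[simp] lemma x4_apply (p : E4) : x4 p = p.2.2 := rfl

/-- The matrix `!![a,b;c,d]` associated to `((a,b),(c,d))`. -/
noncomputable def mat (p : E4) : Matrix (Fin 2) (Fin 2) ℝ := !![p.1.1, p.1.2; p.2.1, p.2.2]

noncomputable def matInv (M : Matrix (Fin 2) (Fin 2) ℝ) : E4 := ((M 0 0, M 0 1), (M 1 0, M 1 1))

lemma matInv_mat (p : E4) : matInv (mat p) = p := rfl

lemma mat_matInv (M : Matrix (Fin 2) (Fin 2) ℝ) : mat (matInv M) = M :=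
  (Matrix.eta_fin_two M).symm

lemma det_mat (p : E4) : (mat p).det = p.1.1 * p.2.2 - p.1.2 * p.2.1 := by
  simp [mat, Matrix.det_fin_two_of]

/-- The parametrization map `(s,t,u,v) ↦ M(s,t) C(u,v)` in coordinates. -/
noncomputable def phi (q : E4) : E4 :=
  ((q.1.1 - q.1.2 * q.2.1, -(q.1.2 * q.2.2)), (q.1.2 + q.1.1 * q.2.1, q.1.1 * q.2.2))

lemma mat_phi (q : E4) : mat (phi q) = Mst q.1.1 q.1.2 * Cuv q.2.1 q.2.2 := by
  ext i j
  fin_cases i <;> fin_cases j <;>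
    (simp [mat, phi, Mst, Cuv, Matrix.mul_apply, Fin.sum_univ_two]; try ring)

lemma det_Mst (s t : ℝ) : (Mst s t).det = s ^ 2 + t ^ 2 := by
  simp [Mst, Matrix.det_fin_two_of]; ring

lemma det_Cuv (u v : ℝ) : (Cuv u v).det = v := by
  simp [Cuv, Matrix.det_fin_two_of]

noncomputable def Dphi (q : E4) : E4 →L[ℝ] E4 :=
  ((x1 - (q.1.2 • x3 + q.2.1 • x2)).prod (-(q.1.2 • x4 + q.2.2 • x2))).prod
    ((x2 + (q.1.1 • x3 + q.2.1 • x1)).prod (q.1.1 • x4 + q.2.2 • x1))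

lemma hasFDerivAt_phi (q : E4) : HasFDerivAt phi (Dphi q) q := by
  have h1 : HasFDerivAt (fun p : E4 => p.1.1) x1 q := hasFDerivAt_fst.comp q hasFDerivAt_fst
  have h2 : HasFDerivAt (fun p : E4 => p.1.2) x2 q := hasFDerivAt_snd.comp q hasFDerivAt_fst
  have h3 : HasFDerivAt (fun p : E4 => p.2.1) x3 q := hasFDerivAt_fst.comp q hasFDerivAt_snd
  have h4 : HasFDerivAt (fun p : E4 => p.2.2) x4 q := hasFDerivAt_snd.comp q hasFDerivAt_snd
  exact HasFDerivAt.prodMk (HasFDerivAt.prodMk (h1.sub (h2.mul h3)) (HasFDerivAt.neg (h2.mul h4)))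
    (HasFDerivAt.prodMk (h2.add (h1.mul h3)) (h1.mul h4))

noncomputable def B4 : Module.Basis (Fin (2+2)) ℝ E4 :=
  ((Module.Basis.finTwoProd ℝ).prod (Module.Basis.finTwoProd ℝ)).reindex finSumFinEquiv

lemma eq0 : (finSumFinEquiv (m:=2) (n:=2)).symm 0 = Sum.inl 0 := by decide
lemma eq1 : (finSumFinEquiv (m:=2) (n:=2)).symm 1 = Sum.inl 1 := by decide
lemma eq2 : (finSumFinEquiv (m:=2) (n:=2)).symm 2 = Sum.inr 0 := by decide
lemma eq3 : (finSumFinEquiv (m:=2) (n:=2)).symm 3 = Sum.inr 1 := by decide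

lemma det_Dphi (q : E4) :
    (Dphi q).det = -(q.2.2 * (q.1.1 ^ 2 + q.1.2 ^ 2)) := by
  have hdet : (Dphi q).det = LinearMap.det ((Dphi q) : E4 →ₗ[ℝ] E4) := rfl
  rw [hdet, ← LinearMap.det_toMatrix B4]
  have hm : LinearMap.toMatrix B4 B4 ((Dphi q) : E4 →ₗ[ℝ] E4) =
      !![1, -q.2.1, -q.1.2, 0; 0, -q.2.2, 0, -q.1.2;
         q.2.1, 1, q.1.1, 0; q.2.2, 0, 0, q.1.1] := by
    ext i j
    fin_cases i <;> fin_cases j <;>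
      simp [LinearMap.toMatrix_apply, B4, Dphi, x1, x2, x3, x4, eq0, eq1, eq2, eq3,
        Module.Basis.reindex_apply, Module.Basis.repr_reindex_apply, Module.Basis.prod_repr_inl,
        Module.Basis.prod_repr_inr, Module.Basis.prod_apply]
  rw [hm, Matrix.det_succ_row_zero]
  simp [Fin.sum_univ_succ, Matrix.det_fin_three, Matrix.submatrix_apply, Fin.succAbove]
  ring

/-- The good parameter set. -/
def Sset : Set E4 := {q | q.2.2 ≠ 0 ∧ q.1.1 ^ 2 + q.1.2 ^ 2 ≠ 0}

lemma measurableSet_Sset : MeasurableSet Sset := by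
  have h1 : Measurable fun q : E4 => q.2.2 := measurable_snd.snd
  have h2 : Measurable fun q : E4 => q.1.1 ^ 2 + q.1.2 ^ 2 :=
    (measurable_fst.fst.pow_const 2).add (measurable_fst.snd.pow_const 2)
  have h : Sset =
      (fun q : E4 => q.2.2) ⁻¹' {0}ᶜ ∩ (fun q : E4 => q.1.1 ^ 2 + q.1.2 ^ 2) ⁻¹' {0}ᶜ := by
    ext q; simp [Sset]
  rw [h]
  exact (h1 (measurableSet_singleton 0).compl).inter (h2 (measurableSet_singleton 0).compl)

/-- Explicit inverse of `phi`. -/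
noncomputable def psi (p : E4) : E4 :=
  ((p.2.2 * (p.1.1 * p.2.2 - p.1.2 * p.2.1) / (p.1.2 ^ 2 + p.2.2 ^ 2),
    -(p.1.2 * (p.1.1 * p.2.2 - p.1.2 * p.2.1)) / (p.1.2 ^ 2 + p.2.2 ^ 2)),
   ((p.1.1 * p.1.2 + p.2.1 * p.2.2) / (p.1.1 * p.2.2 - p.1.2 * p.2.1),
    (p.1.2 ^ 2 + p.2.2 ^ 2) / (p.1.1 * p.2.2 - p.1.2 * p.2.1)))

lemma psi_phi {q : E4} (hq : q ∈ Sset) : psi (phi q) = q := by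
  obtain ⟨⟨s, t⟩, u, v⟩ := q
  obtain ⟨hv, hst⟩ := hq
  simp only [psi, phi]
  rw [show (s - t * u) * (s * v) - -(t * v) * (t + s * u) = v * (s ^ 2 + t ^ 2) from by ring,
    show (-(t * v)) ^ 2 + (s * v) ^ 2 = v ^ 2 * (s ^ 2 + t ^ 2) from by ring,
    show (s - t * u) * -(t * v) + (t + s * u) * (s * v) = u * (v * (s ^ 2 + t ^ 2)) from by ring]
  simp only [Prod.mk.injEq]
  refine ⟨⟨?_, ?_⟩, ?_, ?_⟩ <;> field_simp <;> ring

lemma injOn_phi : Set.InjOn phi Sset := fun a ha b hb h => by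
  have h2 := congrArg psi h
  rwa [psi_phi ha, psi_phi hb] at h2

lemma phi_image : phi '' Sset = {p : E4 | p.1.1 * p.2.2 - p.1.2 * p.2.1 ≠ 0} := by
  ext p
  constructor
  · rintro ⟨q, hq, rfl⟩
    obtain ⟨⟨s, t⟩, u, v⟩ := q
    obtain ⟨hv, hst⟩ := hq
    simp only [phi, Set.mem_setOf_eq]
    rw [show (s - t * u) * (s * v) - -(t * v) * (t + s * u) = v * (s ^ 2 + t ^ 2) from by ring]
    exact mul_ne_zero hv hst
  · intro hp
    obtain ⟨⟨a, b⟩, c, d⟩ := p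
    simp only [Set.mem_setOf_eq] at hp
    have hk : b ^ 2 + d ^ 2 ≠ 0 := by
      intro h
      have hb : b = 0 := by nlinarith [sq_nonneg b, sq_nonneg d]
      have hd : d = 0 := by nlinarith [sq_nonneg b, sq_nonneg d]
      apply hp; rw [hb, hd]; ring
    refine ⟨psi ((a, b), (c, d)), ⟨?_, ?_⟩, ?_⟩
    · simp only [psi]
      exact div_ne_zero hk hp
    · simp only [psi]
      rw [show (d * (a * d - b * c) / (b ^ 2 + d ^ 2)) ^ 2 +
          (-(b * (a * d - b * c)) / (b ^ 2 + d ^ 2)) ^ 2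
          = (a * d - b * c) ^ 2 / (b ^ 2 + d ^ 2) from by field_simp; ring]
      exact div_ne_zero (pow_ne_zero 2 hp) hk
    · simp only [psi, phi, Prod.mk.injEq]
      have hp' : d * a - b * c ≠ 0 := by rwa [mul_comm d a]
      refine ⟨⟨?_, ?_⟩, ?_, ?_⟩ <;> field_simp <;> ring

/-- Transfer between `Fin 2 → Fin 2 → ℝ` and `E4`. -/
noncomputable def iota : (Fin 2 → Fin 2 → ℝ) ≃ᵐ E4 :=
  MeasurableEquiv.finTwoArrow.trans
    (MeasurableEquiv.prodCongr MeasurableEquiv.finTwoArrow MeasurableEquiv.finTwoArrow)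

lemma measurePreserving_iota : MeasurePreserving iota volume volume := by
  have h1 := volume_preserving_finTwoArrow (Fin 2 → ℝ)
  have h2 := volume_preserving_finTwoArrow ℝ
  exact (h2.prod h2).comp h1

lemma mat_iota (g : Fin 2 → Fin 2 → ℝ) : mat (iota g) = Matrix.of g := by
  have h : iota g = ((g 0 0, g 0 1), (g 1 0, g 1 1)) := rfl
  rw [h]
  exact (Matrix.eta_fin_two (Matrix.of g)).symm

/-- Left multiplication by a fixed matrix, as a continuous linear map on coordinates. -/
noncomputable def LB (B : Matrix (Fin 2) (Fin 2) ℝ) : E4 →L[ℝ] E4 :=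
  ((B 0 0 • x1 + B 0 1 • x3).prod (B 0 0 • x2 + B 0 1 • x4)).prod
    ((B 1 0 • x1 + B 1 1 • x3).prod (B 1 0 • x2 + B 1 1 • x4))

lemma mat_LB (B : Matrix (Fin 2) (Fin 2) ℝ) (p : E4) : mat (LB B p) = B * mat p := by
  ext i j
  fin_cases i <;> fin_cases j <;>
    simp [mat, LB, Matrix.mul_apply, Fin.sum_univ_two]

lemma det_LB (B : Matrix (Fin 2) (Fin 2) ℝ) : (LB B).det = B.det ^ 2 := by
  have hdet : (LB B).det = LinearMap.det ((LB B) : E4 →ₗ[ℝ] E4) := rfl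
  rw [hdet, ← LinearMap.det_toMatrix B4]
  have hm : LinearMap.toMatrix B4 B4 ((LB B) : E4 →ₗ[ℝ] E4) =
      !![B 0 0, 0, B 0 1, 0; 0, B 0 0, 0, B 0 1;
         B 1 0, 0, B 1 1, 0; 0, B 1 0, 0, B 1 1] := by
    ext i j
    fin_cases i <;> fin_cases j <;>
      simp [LinearMap.toMatrix_apply, B4, LB, x1, x2, x3, x4, eq0, eq1, eq2, eq3,
        Module.Basis.reindex_apply, Module.Basis.repr_reindex_apply, Module.Basis.prod_repr_inl,
        Module.Basis.prod_repr_inr, Module.Basis.prod_apply]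
  rw [hm, Matrix.det_succ_row_zero]
  simp [Fin.sum_univ_succ, Matrix.det_fin_three, Matrix.submatrix_apply, Fin.succAbove,
    Matrix.det_fin_two]
  ring

lemma LB_cancel {B : Matrix (Fin 2) (Fin 2) ℝ} (hB : B.det ≠ 0) (p : E4) :
    LB B⁻¹ (LB B p) = p := by
  have h1 : mat (LB B⁻¹ (LB B p)) = mat p := by
    rw [mat_LB, mat_LB, ← Matrix.mul_assoc, Matrix.nonsing_inv_mul _ (isUnit_iff_ne_zero.mpr hB),
      Matrix.one_mul]
  have h2 := congrArg matInv h1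
  rwa [matInv_mat, matInv_mat] at h2

lemma LB_cancel' {B : Matrix (Fin 2) (Fin 2) ℝ} (hB : B.det ≠ 0) (p : E4) :
    LB B (LB B⁻¹ p) = p := by
  have h1 : mat (LB B (LB B⁻¹ p)) = mat p := by
    rw [mat_LB, mat_LB, ← Matrix.mul_assoc, Matrix.mul_nonsing_inv _ (isUnit_iff_ne_zero.mpr hB),
      Matrix.one_mul]
  have h2 := congrArg matInv h1
  rwa [matInv_mat, matInv_mat] at h2

/-- Left invariance of `dA / det A ^ 2` on coordinates. -/
lemma lin_cov (f : Matrix (Fin 2) (Fin 2) ℝ → ℝ) (A₀ : Matrix (Fin 2) (Fin 2) ℝ)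
    (h₀ : A₀.det ≠ 0) :
    (∫ p : E4, f (A₀ * mat p) / (mat p).det ^ 2) = ∫ p : E4, f (mat p) / (mat p).det ^ 2 := by
  have hB : (A₀⁻¹).det ≠ 0 := by
    rw [Matrix.det_nonsing_inv, Ring.inverse_eq_inv]; exact inv_ne_zero h₀
  have hinj : Function.Injective fun p : E4 => LB A₀⁻¹ p := by
    intro a b h
    have h2 := congrArg (fun p => LB A₀⁻¹⁻¹ p) h
    simpa only [LB_cancel hB] using h2
  have hsurj : Function.Surjective fun p : E4 => LB A₀⁻¹ p :=
    fun p => ⟨LB A₀⁻¹⁻¹ p, LB_cancel' hB p⟩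
  have him : (fun p : E4 => LB A₀⁻¹ p) '' Set.univ = Set.univ := by
    rw [Set.image_univ, Set.range_eq_univ]
    exact hsurj
  have hcv := integral_image_eq_integral_abs_det_fderiv_smul (volume : Measure E4)
    MeasurableSet.univ (fun x _ => (fun _ => (LB A₀⁻¹).hasFDerivAt.hasFDerivWithinAt) x)
    hinj.injOn (fun p => f (A₀ * mat p) / (mat p).det ^ 2)
  rw [him, Measure.restrict_univ] at hcv
  rw [hcv]
  refine integral_congr_ae (Filter.Eventually.of_forall fun p => ?_)
  dsimp only
  rw [det_LB, mat_LB, ← Matrix.mul_assoc, Matrix.mul_nonsing_inv _ (isUnit_iff_ne_zero.mpr h₀),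
    Matrix.one_mul, Matrix.det_mul, smul_eq_mul,
    abs_of_nonneg (sq_nonneg (A₀⁻¹).det)]
  rw [mul_pow, ← mul_div_assoc, mul_div_mul_left _ _ (pow_ne_zero 2 hB)]

/-- The main change of variables identity. -/
lemma key (f : Matrix (Fin 2) (Fin 2) ℝ → ℝ) :
    iwasawaIntegral f = ∫ g : Fin 2 → Fin 2 → ℝ, f (Matrix.of g) / (Matrix.of g).det ^ 2 := by
  have h0 : ∀ q ∉ Sset,
      f (Mst q.1.1 q.1.2 * Cuv q.2.1 q.2.2) * |q.2.2| /
        (q.2.2 ^ 2 * (q.1.1 ^ 2 + q.1.2 ^ 2)) = 0 := by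
    intro q hq
    rw [Sset, Set.mem_setOf_eq, not_and_or] at hq
    rcases hq with h | h
    · push_neg at h; rw [h]; simp
    · push_neg at h; rw [h]; simp
  have step1 : iwasawaIntegral f = ∫ q in Sset,
      f (Mst q.1.1 q.1.2 * Cuv q.2.1 q.2.2) * |q.2.2| /
        (q.2.2 ^ 2 * (q.1.1 ^ 2 + q.1.2 ^ 2)) :=
    (setIntegral_eq_integral_of_forall_compl_eq_zero h0).symm
  have step2 : (∫ q in Sset,
      f (Mst q.1.1 q.1.2 * Cuv q.2.1 q.2.2) * |q.2.2| /
        (q.2.2 ^ 2 * (q.1.1 ^ 2 + q.1.2 ^ 2))) =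
      ∫ q in Sset, |(Dphi q).det| • (f (mat (phi q)) / (mat (phi q)).det ^ 2) := by
    refine setIntegral_congr_fun measurableSet_Sset fun q hq => ?_
    obtain ⟨hv, hst⟩ := hq
    have hq2 : (0:ℝ) ≤ q.1.1 ^ 2 + q.1.2 ^ 2 := by positivity
    rw [det_Dphi, mat_phi, Matrix.det_mul, det_Mst, det_Cuv, abs_neg, abs_mul,
      abs_of_nonneg hq2, smul_eq_mul]
    field_simp
  have step3 : (∫ q in Sset, |(Dphi q).det| • (f (mat (phi q)) / (mat (phi q)).det ^ 2)) =
      ∫ p in phi '' Sset, f (mat p) / (mat p).det ^ 2 :=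
    (integral_image_eq_integral_abs_det_fderiv_smul (volume : Measure E4) measurableSet_Sset
      (fun q _ => (hasFDerivAt_phi q).hasFDerivWithinAt) injOn_phi
      (fun p : E4 => f (mat p) / (mat p).det ^ 2)).symm
  have step4 : (∫ p in phi '' Sset, f (mat p) / (mat p).det ^ 2) =
      ∫ p : E4, f (mat p) / (mat p).det ^ 2 := by
    rw [phi_image]
    refine setIntegral_eq_integral_of_forall_compl_eq_zero fun p hp => ?_
    simp only [Set.mem_setOf_eq, not_not] at hp
    rw [det_mat, hp]
    simp
  have step5 : (∫ p : E4, f (mat p) / (mat p).det ^ 2) =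
      ∫ g : Fin 2 → Fin 2 → ℝ, f (Matrix.of g) / (Matrix.of g).det ^ 2 := by
    rw [← measurePreserving_iota.integral_comp' (fun p : E4 => f (mat p) / (mat p).det ^ 2)]
    refine integral_congr_ae (Filter.Eventually.of_forall fun g => ?_)
    simp [mat_iota]
  rw [step1, step2, step3, step4, step5]

end GL2Iwasawa

open GL2Iwasawa in
/-- The measure defined through the decomposition `GL₂(ℝ) = K₀ H_{(1,0)}` by
`dμ_{K₀} = ds dt/(s²+t²)`, `dμ_H = du dv/v²` and the factor `|det C| = |v|` is a left
Haar measure on `GL₂(ℝ)`: it is left-translation invariant and coincides with the Haar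
measure `dA/|det A|²`. -/
theorem GL2_haar_via_iwasawa_decomposition
    (f : Matrix (Fin 2) (Fin 2) ℝ → ℝ)
    (hf : Integrable (fun q : (ℝ × ℝ) × (ℝ × ℝ) =>
      f (Mst q.1.1 q.1.2 * Cuv q.2.1 q.2.2) * |q.2.2| /
        (q.2.2 ^ 2 * (q.1.1 ^ 2 + q.1.2 ^ 2))) volume)
    (hf' : Integrable
      (fun g : Fin 2 → Fin 2 → ℝ => f (Matrix.of g) / (Matrix.of g).det ^ 2) volume) :
    (∀ A₀ : Matrix (Fin 2) (Fin 2) ℝ, A₀.det ≠ 0 →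
      Integrable (fun q : (ℝ × ℝ) × (ℝ × ℝ) =>
        f (A₀ * (Mst q.1.1 q.1.2 * Cuv q.2.1 q.2.2)) * |q.2.2| /
          (q.2.2 ^ 2 * (q.1.1 ^ 2 + q.1.2 ^ 2))) volume →
      iwasawaIntegral (fun A => f (A₀ * A)) = iwasawaIntegral f) ∧
    iwasawaIntegral f =
      ∫ g : Fin 2 → Fin 2 → ℝ, f (Matrix.of g) / (Matrix.of g).det ^ 2 := by
  constructor
  · intro A₀ hA₀ _
    rw [key, key]
    have e1 : (∫ g : Fin 2 → Fin 2 → ℝ, f (A₀ * Matrix.of g) / (Matrix.of g).det ^ 2) =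
        ∫ p : E4, f (A₀ * mat p) / (mat p).det ^ 2 := by
      rw [← measurePreserving_iota.integral_comp'
        (fun p : E4 => f (A₀ * mat p) / (mat p).det ^ 2)]
      refine integral_congr_ae (Filter.Eventually.of_forall fun g => ?_)
      simp [mat_iota]
    have e2 : (∫ g : Fin 2 → Fin 2 → ℝ, f (Matrix.of g) / (Matrix.of g).det ^ 2) =
        ∫ p : E4, f (mat p) / (mat p).det ^ 2 := by
      rw [← measurePreserving_iota.integral_comp' (fun p : E4 => f (mat p) / (mat p).det ^ 2)]
      refine integral_congr_ae (Filter.Eventually.of_forall fun g => ?_)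
      simp [mat_iota]
    rw [e1, e2]
    exact lin_cov f A₀ hA₀
  · exact key f
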